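/- arXiv:1605.09558 — 2 statements merged into one kernel-verified Lean document; each statement's English description precedes it below -/
import Mathlib

section
/- Let S be a binary derivation tree (each internal node has exactly two children) with leaves labeled by characters so that the leaf sequence spells a string T, and let P be a substring of T with |P| > 1 occurring at position p. Then there is a unique lowest node v of the tree whose leaf interval covers [p, p+|P|−1]; moreover v is internal, and P splits as P = P₁P₂ with 1 ≤ |P₁| < |P|, where P₁ is a suffix of the string spelled by the left child of v and P₂ is a prefix of the string spelled by the right child of v. -/
/-!
Whether a node covers `[p, p + m)` is decided one level at a time: at a node with children
`l` and `r` the interval lies inside `l`, inside `r`, or straddles the boundary between them,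
and for `m ≥ 1` these cases exclude each other. Descending through the first two cases therefore
reaches exactly one lowest covering node, the straddling one. There the occurrence of `P`
splits at the boundary into a nonempty suffix of `l`'s string and a nonempty prefix of `r`'s;
since `|P| ≥ 2`, the node cannot be a leaf.
-/

/-- A binary derivation tree: every internal node has exactly two children and
leaves are labeled by characters. -/
inductive BTree (α : Type*) where
  | leaf : α → BTree α
  | node : BTree α → BTree α → BTree α

/-- The string spelled by a tree (concatenation of leaf labels, left to right). -/
def BTree.yld {α : Type*} : BTree α → List α
  | .leaf a => [a]
  | .node l r => l.yld ++ r.yld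

/-- The subtree at a given path (`false` = go left, `true` = go right). -/
def BTree.sub {α : Type*} : BTree α → List Bool → Option (BTree α)
  | t, [] => some t
  | .leaf _, _ :: _ => none
  | .node l r, b :: bs => if b then r.sub bs else l.sub bs

/-- The starting leaf index (0-based) of the subtree at a given path. -/
def BTree.off {α : Type*} : BTree α → List Bool → ℕ
  | _, [] => 0
  | .leaf _, _ :: _ => 0
  | .node l r, b :: bs => if b then l.yld.length + r.off bs else l.off bs

/-- The node at path `π` exists and its leaf interval covers `[p, p + m)`. -/
def Covers {α : Type*} (t : BTree α) (π : List Bool) (p m : ℕ) : Prop :=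
  ∃ u, t.sub π = some u ∧ t.off π ≤ p ∧ p + m ≤ t.off π + u.yld.length

theorem List.exists_eq_append_of_prefix_append {α : Type*} {P X Y : List α} (h : P <+: X ++ Y)
    (hX : X.length ≤ P.length) : ∃ P₂, P = X ++ P₂ ∧ P₂ <+: Y := by
  obtain ⟨P₂, rfl⟩ := List.prefix_of_prefix_length_le (List.prefix_append X Y) h hX
  exact ⟨P₂, rfl, (List.prefix_append_right_inj X).1 h⟩

namespace BTree

variable {α : Type*}

theorem off_add_length_le_of_sub_eq_some :
    ∀ {t u : BTree α} {π : List Bool}, t.sub π = some u → t.off π + u.yld.length ≤ t.yld.length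
  | _, _, [], h => by simp_all [sub, off]
  | .leaf _, _, _ :: _, h => by simp [sub] at h
  | .node l r, _, false :: _, h => by
    have := off_add_length_le_of_sub_eq_some (t := l) (by simpa [sub] using h)
    simp only [off, yld, List.length_append, Bool.false_eq_true, if_false]
    omega
  | .node l r, _, true :: _, h => by
    have := off_add_length_le_of_sub_eq_some (t := r) (by simpa [sub] using h)
    simp only [off, yld, List.length_append, if_true]
    omega

end BTree

open BTree

section Covers

variable {α : Type*} {t l r : BTree α} {π : List Bool} {p m : ℕ}

theorem Covers.add_le_length (h : Covers t π p m) : p + m ≤ t.yld.length := by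
  obtain ⟨u, hu, -, hle⟩ := h
  have := off_add_length_le_of_sub_eq_some hu
  omega

@[simp]
theorem covers_nil : Covers t [] p m ↔ p + m ≤ t.yld.length := by
  simp [Covers, sub, off]

@[simp]
theorem not_covers_leaf_cons (a : α) (b : Bool) : ¬ Covers (.leaf a) (b :: π) p m := by
  simp [Covers, sub]

@[simp]
theorem covers_node_false_cons : Covers (.node l r) (false :: π) p m ↔ Covers l π p m := by
  simp [Covers, sub, off]

@[simp]
theorem covers_node_true_cons :
    Covers (.node l r) (true :: π) p m ↔
      l.yld.length ≤ p ∧ Covers r π (p - l.yld.length) m := by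
  simp only [Covers, sub, off, if_true]
  constructor
  · rintro ⟨u, hu, h₁, h₂⟩
    exact ⟨by omega, u, hu, by omega, by omega⟩
  · rintro ⟨hl, u, hu, h₁, h₂⟩
    exact ⟨u, hu, by omega, by omega⟩

end Covers

/-- Since a node covers whatever one of its children covers, the covering nodes with no covering
child are exactly the lowest covering nodes. -/
def IsLowestCover {α : Type*} (t : BTree α) (π : List Bool) (p m : ℕ) : Prop :=
  Covers t π p m ∧ ∀ b, ¬ Covers t (π ++ [b]) p m

section IsLowestCover

variable {α : Type*} {t l r : BTree α} {π : List Bool} {p m : ℕ}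

theorem isLowestCover_leaf_iff (a : α) :
    IsLowestCover (.leaf a) π p m ↔ π = [] ∧ p + m ≤ 1 := by
  cases π <;> simp [IsLowestCover, yld]

theorem isLowestCover_node_iff :
    IsLowestCover (.node l r) π p m ↔
      (π = [] ∧ p < l.yld.length ∧ l.yld.length < p + m ∧
        p + m ≤ l.yld.length + r.yld.length) ∨
      (∃ ρ, π = false :: ρ ∧ IsLowestCover l ρ p m) ∨
      (∃ ρ, π = true :: ρ ∧ l.yld.length ≤ p ∧ IsLowestCover r ρ (p - l.yld.length) m) := by
  rcases π with _ | ⟨_ | _, ρ⟩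
  · simp only [IsLowestCover, List.nil_append, Bool.forall_bool, covers_node_false_cons,
      covers_node_true_cons, covers_nil, yld, List.length_append, reduceCtorEq, false_and,
      exists_false, or_false, true_and]
    omega
  · simp [IsLowestCover]
  · simp only [IsLowestCover, List.cons_append, covers_node_true_cons, not_and, Bool.forall_bool, reduceCtorEq, false_and, List.cons.injEq,
      Bool.true_eq_false, exists_const, true_and, exists_eq_left', false_or]
    tauto

theorem exists_isLowestCover (h : p + m ≤ t.yld.length) :
    ∃ π, IsLowestCover t π p m := by
  induction t generalizing p with
  | leaf a => exact ⟨[], (isLowestCover_leaf_iff a).2 ⟨rfl, h⟩⟩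
  | node l r ihl ihr =>
    simp only [yld, List.length_append] at h
    by_cases hleft : p + m ≤ l.yld.length
    · obtain ⟨ρ, hρ⟩ := ihl hleft
      exact ⟨false :: ρ, isLowestCover_node_iff.2 (.inr (.inl ⟨ρ, rfl, hρ⟩))⟩
    by_cases hright : l.yld.length ≤ p
    · obtain ⟨ρ, hρ⟩ := ihr (p := p - l.yld.length) (by omega)
      exact ⟨true :: ρ, isLowestCover_node_iff.2 (.inr (.inr ⟨ρ, rfl, hright, hρ⟩))⟩
    exact ⟨[], isLowestCover_node_iff.2 (.inl ⟨rfl, by omega, by omega, h⟩)⟩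

theorem IsLowestCover.unique (hm : 0 < m) {π' : List Bool} (h : IsLowestCover t π p m)
    (h' : IsLowestCover t π' p m) : π = π' := by
  induction t generalizing p π π' with
  | leaf a =>
    rw [(isLowestCover_leaf_iff a).1 h |>.1, (isLowestCover_leaf_iff a).1 h' |>.1]
  | node l r ihl ihr =>
    rcases isLowestCover_node_iff.1 h with ⟨rfl, h₁⟩ | ⟨ρ, rfl, hρ⟩ | ⟨ρ, rfl, hp, hρ⟩ <;>
    rcases isLowestCover_node_iff.1 h' with ⟨rfl, h₁'⟩ | ⟨ρ', rfl, hρ'⟩ | ⟨ρ', rfl, hp', hρ'⟩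
    · rfl
    · exact absurd hρ'.1.add_le_length (by omega)
    · omega
    · exact absurd hρ.1.add_le_length (by omega)
    · rw [ihl hρ hρ']
    · exact absurd hρ.1.add_le_length (by omega)
    · omega
    · exact absurd hρ'.1.add_le_length (by omega)
    · rw [ihr hρ hρ']

theorem IsLowestCover.exists_split {P : List α} (hP : 1 < P.length)
    (hocc : P <+: t.yld.drop p) (h : IsLowestCover t π p P.length) :
    ∃ l r P₁ P₂, t.sub π = some (.node l r) ∧ P = P₁ ++ P₂ ∧
      1 ≤ P₁.length ∧ P₁.length < P.length ∧ P₁ <:+ l.yld ∧ P₂ <+: r.yld := by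
  induction t generalizing p π with
  | leaf a => have := ((isLowestCover_leaf_iff a).1 h).2; omega
  | node l r ihl ihr =>
    rw [yld, List.drop_append] at hocc
    rcases isLowestCover_node_iff.1 h with ⟨rfl, h₁, h₂, -⟩ | ⟨ρ, rfl, hρ⟩ | ⟨ρ, rfl, hp, hρ⟩
    · rw [Nat.sub_eq_zero_of_le h₁.le, List.drop_zero] at hocc
      obtain ⟨P₂, rfl, hP₂⟩ := List.exists_eq_append_of_prefix_append hocc (by simp; omega)
      exact ⟨l, r, _, P₂, rfl, rfl, by simp; omega, by simp at h₂ ⊢; omega,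
        List.drop_suffix _ _, hP₂⟩
    · have hl := hρ.1.add_le_length
      obtain ⟨l', r', P₁, P₂, hsub, hsplit⟩ :=
        ihl ((List.isPrefix_append_of_length (by simp; omega)).1 hocc) hρ
      exact ⟨l', r', P₁, P₂, by simpa [sub] using hsub, hsplit⟩
    · rw [List.drop_eq_nil_of_le (by simpa using hp), List.nil_append] at hocc
      obtain ⟨l', r', P₁, P₂, hsub, hsplit⟩ := ihr hocc hρ
      exact ⟨l', r', P₁, P₂, by simpa [sub] using hsub, hsplit⟩

end IsLowestCover

/-- for an occurrence (at 0-based position `p`) of a pattern `P`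
with `|P| > 1` in the string spelled by a binary derivation tree, there is a
unique lowest node covering the occurrence; it is internal, and `P = P₁P₂`
with `1 ≤ |P₁| < |P|`, `P₁` a suffix of the left child's string and `P₂` a
prefix of the right child's string. -/
theorem lowest_covering_node {α : Type*} (t : BTree α) (P : List α) (p : ℕ)
    (hP : 1 < P.length) (hocc : P <+: t.yld.drop p) :
    (∃! π : List Bool,
      Covers t π p P.length ∧ ∀ b, ¬ Covers t (π ++ [b]) p P.length) ∧
    (∀ π : List Bool,
      Covers t π p P.length → (∀ b, ¬ Covers t (π ++ [b]) p P.length) →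
      ∃ l r P₁ P₂, t.sub π = some (.node l r) ∧ P = P₁ ++ P₂ ∧
        1 ≤ P₁.length ∧ P₁.length < P.length ∧
        P₁ <:+ l.yld ∧ P₂ <+: r.yld) := by
  have hfits : p + P.length ≤ t.yld.length := by
    have := hocc.length_le
    rw [List.length_drop] at this
    omega
  obtain ⟨π, hπ⟩ := exists_isLowestCover hfits
  exact ⟨⟨π, hπ, fun π' hπ' => IsLowestCover.unique (by omega) hπ' hπ⟩,
    fun π hcov hlow => IsLowestCover.exists_split hP hocc ⟨hcov, hlow⟩⟩
end

section
/- If |Epow(Shrink_0(P))| = 1, i.e., P = a^{|P|} consists of a single repeated character a, and P occurs crossing the boundary of a node X → X_ℓX_r (or within a run node X → X̂^k), then in a signature-encoding-style grammar where maximal runs of equal symbols are grouped into a single run production, every primary occurrence (X,j) of P = a^{|P|} satisfies j = 1 and X is a run production X → â^d with val(â) = a and d ≥ |P|. -/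
/-- Right-hand sides of an RLSLP: a terminal character, a pair of variables, or
a power (run-length production) `x^k`. -/
inductive Rhs (α : Type*) (n : ℕ) where
  | chr : α → Rhs α n
  | pair : Fin n → Fin n → Rhs α n
  | pow : Fin n → ℕ → Rhs α n

/-
A unary pattern `a^m` crossing a split `L | R` of `val X` forces the last letter of `L` and the
first letter of `R` to both be `a`. A pair production forbids equal boundary letters outright;
a run `x^k` forbids them whenever `|val x| > 1`, so `val x` is the single letter `a`, the
occurrence (starting before position `|val x| = 1`) starts at 0, and it fits into `a^k`.
-/

namespace List

variable {α : Type*}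

theorem getElem?_eq_of_replicate_isPrefix_drop {w : List α} {a : α} {m j i : ℕ}
    (h : replicate m a <+: w.drop j) (hji : j ≤ i) (him : i < j + m) : w[i]? = some a := by
  obtain ⟨t, ht⟩ := h
  have hi : i - j < (replicate m a).length := by rw [length_replicate]; omega
  rw [show i = j + (i - j) by omega, ← getElem?_drop, ← ht, getElem?_append_left hi,
    getElem?_replicate_of_lt (by omega)]

theorem getLast?_eq_and_head?_eq_of_replicate_isPrefix_drop_append {L R : List α} {a : α}
    {m j : ℕ} (h : replicate m a <+: (L ++ R).drop j) (h1 : j < L.length)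
    (h2 : L.length < j + m) : L.getLast? = some a ∧ R.head? = some a := by
  have hlast := getElem?_eq_of_replicate_isPrefix_drop h (i := L.length - 1) (by omega) (by omega)
  have hhead := getElem?_eq_of_replicate_isPrefix_drop h (i := L.length) (by omega) h2
  rw [getElem?_append_left (by omega)] at hlast
  rw [getElem?_append_right le_rfl, Nat.sub_self] at hhead
  exact ⟨getLast?_eq_getElem? ▸ hlast, head?_eq_getElem? ▸ hhead⟩

theorem eq_zero_and_eq_singleton_of_replicate_isPrefix_drop_flatten_replicate {u : List α}
    {a : α} {m k j : ℕ} (h : replicate m a <+: (replicate k u).flatten.drop j)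
    (h1 : j < u.length) (h2 : u.length < j + m) (hu : 1 < u.length → u.getLast? ≠ u.head?) :
    j = 0 ∧ u = [a] ∧ m ≤ k := by
  have hm := h.length_le
  cases k with
  | zero =>
    simp only [replicate_zero, flatten_nil, drop_nil, length_nil, length_replicate] at hm
    omega
  | succ k =>
    rw [replicate_succ, flatten_cons] at h
    obtain ⟨hlast, hhead⟩ := getLast?_eq_and_head?_eq_of_replicate_isPrefix_drop_append h h1 h2
    have hk : k ≠ 0 := by rintro rfl; simp at hhead
    have hu1 : u.length = 1 := by
      by_contra hne
      exact hu (by omega) (by rw [hlast, ← hhead, head?_flatten_replicate hk])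
    obtain ⟨b, rfl⟩ := length_eq_one_iff.1 hu1
    simp only [getLast?_singleton, Option.some.injEq] at hlast
    subst hlast
    simp only [length_singleton] at h1
    obtain rfl : j = 0 := by omega
    simp only [length_replicate, flatten_replicate_singleton, drop_replicate, tsub_zero] at hm
    exact ⟨rfl, rfl, hm⟩

end List

theorem unary_pattern_primary_occurrence_general {α : Type*} {n : ℕ}
    (rhs : Fin n → Rhs α n) (val : Fin n → List α) (leftLen : Fin n → ℕ)
    (hval : ∀ i : Fin n,
      (∀ a, rhs i = .chr a → val i = [a]) ∧
      (∀ l r, rhs i = .pair l r → val i = val l ++ val r) ∧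
      (∀ x k, rhs i = .pow x k → val i = (List.replicate k (val x)).flatten))
    (hleft : ∀ i : Fin n,
      (∀ a, rhs i = .chr a → leftLen i = 0) ∧
      (∀ l r, rhs i = .pair l r → leftLen i = (val l).length) ∧
      (∀ x k, rhs i = .pow x k → leftLen i = (val x).length))
    (hbpair : ∀ (i l r : Fin n), rhs i = .pair l r →
      (val l).getLast? ≠ (val r).head?)
    (hbpow : ∀ (i x : Fin n) (k : ℕ), rhs i = .pow x k →
      1 < (val x).length → (val x).getLast? ≠ (val x).head?)
    (a : α) (P : List α)
    (hPa : P = List.replicate P.length a)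
    (X : Fin n) (j : ℕ)
    (hocc : P <+: (val X).drop j)
    (h1 : j < leftLen X) (h2 : leftLen X < j + P.length) :
    j = 0 ∧ ∃ (x : Fin n) (k : ℕ),
      rhs X = .pow x k ∧ val x = [a] ∧ P.length ≤ k := by
  rw [hPa] at hocc
  obtain ⟨-, hval_pair, hval_pow⟩ := hval X
  obtain ⟨hleft_chr, hleft_pair, hleft_pow⟩ := hleft X
  rcases hX : rhs X with c | ⟨l, r⟩ | ⟨x, k⟩
  · have := hleft_chr c hX
    omega
  · rw [hval_pair l r hX] at hocc
    rw [hleft_pair l r hX] at h1 h2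
    obtain ⟨hlast, hhead⟩ :=
      List.getLast?_eq_and_head?_eq_of_replicate_isPrefix_drop_append hocc h1 h2
    exact absurd (hlast.trans hhead.symm) (hbpair X l r hX)
  · rw [hval_pow x k hX] at hocc
    rw [hleft_pow x k hX] at h1 h2
    obtain ⟨hj, hx, hk⟩ :=
      List.eq_zero_and_eq_singleton_of_replicate_isPrefix_drop_flatten_replicate
        hocc h1 h2 (hbpow X x k hX)
    exact ⟨hj, x, k, rfl, hx, hk⟩

/-- in a signature-encoding-style RLSLP — where maximal runs of
equal characters are grouped into run productions, so that the boundary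
characters across any pair split, and across the copies of any power of a
variable deriving a string of length `> 1`, are distinct — every primary
occurrence `(X, j)` (0-based `j`) of a unary pattern `P = a^{|P|}` with
`|P| > 1` satisfies `j = 0`, and `X` is a run production `X → x^k` with
`val x = [a]` and `k ≥ |P|`. -/
theorem unary_pattern_primary_occurrence {α : Type*} {n : ℕ}
    (rhs : Fin n → Rhs α n) (val : Fin n → List α) (leftLen : Fin n → ℕ)
    (hval : ∀ i : Fin n,
      (∀ a, rhs i = .chr a → val i = [a]) ∧
      (∀ l r, rhs i = .pair l r → val i = val l ++ val r) ∧
      (∀ x k, rhs i = .pow x k → val i = (List.replicate k (val x)).flatten))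
    (hleft : ∀ i : Fin n,
      (∀ a, rhs i = .chr a → leftLen i = 0) ∧
      (∀ l r, rhs i = .pair l r → leftLen i = (val l).length) ∧
      (∀ x k, rhs i = .pow x k → leftLen i = (val x).length))
    (hne : ∀ i : Fin n, val i ≠ [])
    (hposk : ∀ (i x : Fin n) (k : ℕ), rhs i = .pow x k → 1 ≤ k)
    (hbpair : ∀ (i l r : Fin n), rhs i = .pair l r →
      (val l).getLast? ≠ (val r).head?)
    (hbpow : ∀ (i x : Fin n) (k : ℕ), rhs i = .pow x k →
      1 < (val x).length → (val x).getLast? ≠ (val x).head?)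
    (a : α) (P : List α) (hP : 1 < P.length)
    (hPa : P = List.replicate P.length a)
    (X : Fin n) (j : ℕ)
    (hocc : P <+: (val X).drop j)
    (h1 : j < leftLen X) (h2 : leftLen X < j + P.length) :
    j = 0 ∧ ∃ (x : Fin n) (k : ℕ),
      rhs X = .pow x k ∧ val x = [a] ∧ P.length ≤ k :=
  unary_pattern_primary_occurrence_general rhs val leftLen hval hleft hbpair hbpow a P hPa X j hocc
    h1 h2
end
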